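/- For all real x with 0 < |x| < π/2, one has 4 + (1/10)·x³·sin x < 3x/sin x + cos x. -/

import Mathlib

/-!
Both sides are even in `x`, so we may take `0 < x`; then `sin x > 0` and the claim becomes
`4 sin x + x³ sin² x / 10 < 3x + sin x cos x`. Bounding `sin x` above by its Taylor polynomial of
degree 5 and `sin x cos x = sin (2x) / 2` below by that of degree 7 leaves a polynomial inequality
which holds for `0 < x ≤ 2`. For `t ≥ 0` the Taylor polynomials of `sin` and `cos` alternately
over- and underestimate, as one sees by integrating `cos t ≤ 1` repeatedly.
-/

open Real Finset Nat

noncomputable def sinTaylor (n : ℕ) (x : ℝ) : ℝ :=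
  ∑ k ∈ range n, (-1) ^ k * x ^ (2 * k + 1) / (2 * k + 1)!

noncomputable def cosTaylor (n : ℕ) (x : ℝ) : ℝ :=
  ∑ k ∈ range n, (-1) ^ k * x ^ (2 * k) / (2 * k)!

theorem hasDerivAt_sinTaylor (n : ℕ) (x : ℝ) :
    HasDerivAt (sinTaylor n) (cosTaylor n x) x := by
  rw [cosTaylor]
  refine (HasDerivAt.fun_sum fun k _ =>
    ((hasDerivAt_pow (2 * k + 1) x).const_mul ((-1 : ℝ) ^ k)).div_const
      ((2 * k + 1)! : ℝ)).congr_deriv ?_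
  refine sum_congr rfl fun k _ => ?_
  rw [Nat.factorial_succ]
  push_cast
  field_simp

theorem hasDerivAt_cosTaylor_succ (n : ℕ) (x : ℝ) :
    HasDerivAt (cosTaylor (n + 1)) (-sinTaylor n x) x := by
  have h : cosTaylor (n + 1) =
      fun y : ℝ => ∑ k ∈ range n, (-1 : ℝ) ^ (k + 1) * y ^ (2 * k + 2) / (2 * k + 2)! + 1 := by
    ext y
    simp [cosTaylor, sum_range_succ', pow_succ, mul_add]
  rw [h, sinTaylor, ← sum_neg_distrib]
  refine ((HasDerivAt.fun_sum fun k _ =>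
    ((hasDerivAt_pow (2 * k + 2) x).const_mul ((-1 : ℝ) ^ (k + 1))).div_const
      ((2 * k + 2)! : ℝ)).add_const 1).congr_deriv ?_
  refine sum_congr rfl fun k _ => ?_
  rw [show 2 * k + 2 = (2 * k + 1) + 1 by ring, Nat.factorial_succ]
  push_cast
  field_simp
  ring

theorem nonneg_of_hasDerivAt_nonneg {f f' : ℝ → ℝ} (hf : ∀ x, HasDerivAt f (f' x) x)
    (h0 : 0 ≤ f 0) (hf' : ∀ x, 0 < x → 0 ≤ f' x) {t : ℝ} (ht : 0 ≤ t) : 0 ≤ f t := by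
  have hmono : MonotoneOn f (Set.Ici 0) :=
    monotoneOn_of_hasDerivWithinAt_nonneg (convex_Ici 0)
      (fun x _ => (hf x).continuousAt.continuousWithinAt)
      (fun x _ => (hf x).hasDerivWithinAt)
      (fun x hx => hf' x (by simpa using hx))
  exact h0.trans (hmono Set.self_mem_Ici ht ht)

theorem neg_one_pow_mul_sin_sub_sinTaylor_nonneg_of_cos {n : ℕ}
    (hcos : ∀ t, 0 ≤ t → 0 ≤ (-1) ^ n * (cos t - cosTaylor n t)) {t : ℝ} (ht : 0 ≤ t) :
    0 ≤ (-1) ^ n * (sin t - sinTaylor n t) :=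
  nonneg_of_hasDerivAt_nonneg
    (fun x => ((hasDerivAt_sin x).sub (hasDerivAt_sinTaylor n x)).const_mul _)
    (by simp [sinTaylor]) (fun x hx => hcos x hx.le) ht

theorem neg_one_pow_mul_cos_sub_cosTaylor_nonneg_of_sin {n : ℕ}
    (hsin : ∀ t, 0 ≤ t → 0 ≤ (-1) ^ n * (sin t - sinTaylor n t)) {t : ℝ} (ht : 0 ≤ t) :
    0 ≤ (-1) ^ (n + 1) * (cos t - cosTaylor (n + 1) t) :=
  nonneg_of_hasDerivAt_nonneg
    (fun x => ((hasDerivAt_cos x).sub (hasDerivAt_cosTaylor_succ n x)).const_mul _)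
    (by simp [cosTaylor, sum_range_succ']) (fun x hx => (hsin x hx.le).trans_eq (by ring)) ht

theorem neg_one_pow_mul_cos_sub_cosTaylor_nonneg (n : ℕ) {t : ℝ} (ht : 0 ≤ t) :
    0 ≤ (-1) ^ (n + 1) * (cos t - cosTaylor (n + 1) t) := by
  induction n generalizing t with
  | zero => simpa [cosTaylor] using cos_le_one t
  | succ n ih =>
    exact neg_one_pow_mul_cos_sub_cosTaylor_nonneg_of_sin
      (fun _ => neg_one_pow_mul_sin_sub_sinTaylor_nonneg_of_cos fun _ => ih) ht

theorem neg_one_pow_mul_sin_sub_sinTaylor_nonneg (n : ℕ) {t : ℝ} (ht : 0 ≤ t) :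
    0 ≤ (-1) ^ (n + 1) * (sin t - sinTaylor (n + 1) t) :=
  neg_one_pow_mul_sin_sub_sinTaylor_nonneg_of_cos
    (fun _ => neg_one_pow_mul_cos_sub_cosTaylor_nonneg n) ht

theorem sin_le_quintic_taylor {x : ℝ} (hx : 0 ≤ x) :
    sin x ≤ x - x ^ 3 / 6 + x ^ 5 / 120 := by
  have h := neg_one_pow_mul_sin_sub_sinTaylor_nonneg 2 hx
  norm_num [sinTaylor, sum_range_succ, Nat.factorial] at h
  linarith

theorem septic_taylor_le_sin {x : ℝ} (hx : 0 ≤ x) :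
    x - x ^ 3 / 6 + x ^ 5 / 120 - x ^ 7 / 5040 ≤ sin x := by
  have h := neg_one_pow_mul_sin_sub_sinTaylor_nonneg 3 hx
  norm_num [sinTaylor, sum_range_succ, Nat.factorial] at h
  linarith

/-- `3x + T₇(2x)/2 - (4 T₅(x) + x³ T₅(x)² / 10)`, where `Tₙ` is the Taylor polynomial of `sin` of
degree `n`. -/
theorem cusa_huygens_gap_pos {x : ℝ} (hx0 : 0 < x) (hx2 : x ≤ 2) :
    0 < 13 / 630 * x ^ 7 - x ^ 9 / 225 + x ^ 11 / 3600 - x ^ 13 / 144000 := by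
  have hsq : x ^ 2 ≤ 4 := by nlinarith
  have hfactor : 0 < 13 / 630 - x ^ 2 / 225 + x ^ 4 / 3600 - x ^ 6 / 144000 := by
    nlinarith [sq_nonneg (x ^ 2), pow_pos hx0 2]
  linarith [mul_pos (pow_pos hx0 7) hfactor]

theorem cusa_huygens_lower_of_pos {x : ℝ} (hx0 : 0 < x) (hx2 : x ≤ 2) :
    4 + (1 / 10) * x ^ 3 * sin x < 3 * x / sin x + cos x := by
  have hsin_pos : 0 < sin x := sin_pos_of_pos_of_lt_pi hx0 (by linarith [pi_gt_three])
  have hsin_le := sin_le_quintic_taylor hx0.le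
  have hsin_two_mul := septic_taylor_le_sin (by linarith : 0 ≤ 2 * x)
  rw [sin_two_mul] at hsin_two_mul
  rw [div_add' _ _ _ hsin_pos.ne', lt_div_iff₀ hsin_pos]
  calc (4 + 1 / 10 * x ^ 3 * sin x) * sin x = 4 * sin x + x ^ 3 / 10 * sin x ^ 2 := by ring
    _ ≤ 4 * (x - x ^ 3 / 6 + x ^ 5 / 120) + x ^ 3 / 10 * (x - x ^ 3 / 6 + x ^ 5 / 120) ^ 2 := by
      gcongr
    _ < 4 * (x - x ^ 3 / 6 + x ^ 5 / 120) + x ^ 3 / 10 * (x - x ^ 3 / 6 + x ^ 5 / 120) ^ 2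
        + (13 / 630 * x ^ 7 - x ^ 9 / 225 + x ^ 11 / 3600 - x ^ 13 / 144000) := by
      linarith [cusa_huygens_gap_pos hx0 hx2]
    _ = 3 * x + (2 * x - (2 * x) ^ 3 / 6 + (2 * x) ^ 5 / 120 - (2 * x) ^ 7 / 5040) / 2 := by ring
    _ ≤ 3 * x + cos x * sin x := by linarith

theorem cusa_huygens_lower (x : ℝ) (h1 : 0 < |x|) (h2 : |x| < π / 2) :
    4 + (1 / 10) * x ^ 3 * Real.sin x < 3 * x / Real.sin x + Real.cos x := by
  have habs : |x| ≤ 2 := by linarith [pi_lt_four]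
  rcases (abs_pos.mp h1).lt_or_gt with hneg | hpos
  · have h := cusa_huygens_lower_of_pos (neg_pos.2 hneg) (by rwa [abs_of_neg hneg] at habs)
    rw [sin_neg, cos_neg] at h
    convert h using 2 <;> ring
  · exact cusa_huygens_lower_of_pos hpos (by rwa [abs_of_pos hpos] at habs)
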